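/- Let p and q be odd integers and let G = ⟨x, y | x^p = y^q⟩ be the (p,q)-torus knot group. Then x^p is not conjugate in G to the square of any element: for all w, g ∈ G, we have g · w² · g⁻¹ ≠ x^p. (In particular x^p is not itself a square in G.) -/
import Mathlib


/-- The single relator `x^p * y^(-q)` for the `(p,q)`-torus knot group, in the free
group on `Bool`, where `true` plays the role of `x` and `false` the role of `y`. -/
def torusKnotRels (p q : ℤ) : Set (FreeGroup Bool) :=
  {FreeGroup.of true ^ p * FreeGroup.of false ^ (-q)}

/-- If `p` and `q` are both odd, then in the `(p,q)`-torus knot group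
`G = ⟨x, y | x^p = y^q⟩` the element `x^p` is not conjugate to the square of any
element: for all `w, g ∈ G`, `g * w^2 * g⁻¹ ≠ x^p`. -/
theorem torus_knot_xp_not_conjugate_to_square (p q : ℤ) (hp : Odd p) (hq : Odd q)
    (w g : PresentedGroup (torusKnotRels p q)) :
    g * w ^ 2 * g⁻¹ ≠ (PresentedGroup.of true : PresentedGroup (torusKnotRels p q)) ^ p := by
  -- exponent-sum mod 2 homomorphism
  set f : Bool → Multiplicative (ZMod 2) := fun _ => Multiplicative.ofAdd 1 with hf
  have hrel : ∀ r ∈ torusKnotRels p q, FreeGroup.lift f r = 1 := by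
    rintro r rfl
    rw [map_mul, map_zpow, map_zpow, FreeGroup.lift_apply_of, FreeGroup.lift_apply_of, hf]
    simp only [← ofAdd_zsmul, ← ofAdd_add]
    have : p • (1 : ZMod 2) + (-q) • (1 : ZMod 2) = 0 := by
      rw [zsmul_eq_mul, zsmul_eq_mul, mul_one, mul_one]
      have hp2 : (p : ZMod 2) = 1 := by
        obtain ⟨k, rfl⟩ := hp; push_cast; ring_nf; simp [(by decide : (2 : ZMod 2) = 0)]
      have hq2 : (q : ZMod 2) = 1 := by
        obtain ⟨k, rfl⟩ := hq; push_cast; ring_nf; simp [(by decide : (2 : ZMod 2) = 0)]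
      push_cast
      rw [hp2, hq2]
      decide
    rw [this]
    rfl
  set φ := PresentedGroup.toGroup hrel with hφ
  intro h
  have := congrArg φ h
  rw [map_mul, map_mul, map_inv, map_pow, map_zpow, PresentedGroup.toGroup.of] at this
  have hcomm : ∀ a b : Multiplicative (ZMod 2), a * b = b * a := fun a b => mul_comm a b
  rw [mul_comm (φ g), mul_assoc, mul_inv_cancel, mul_one] at this
  have hL : φ w ^ 2 = 1 := by
    have : ∀ a : Multiplicative (ZMod 2), a ^ 2 = 1 := by decide
    exact this _
  rw [hL] at this
  have hR : (f true) ^ p ≠ 1 := by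
    rw [hf, ← ofAdd_zsmul, zsmul_eq_mul, mul_one]
    intro hc
    have : (p : ZMod 2) = 0 := by
      have := congrArg Multiplicative.toAdd hc
      simpa using this
    obtain ⟨k, rfl⟩ := hp
    push_cast at this
    simp [(by decide : (2 : ZMod 2) = 0)] at this
  exact hR this.symm
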